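/- Let a ∈ H satisfy t(a) = −a, and define the bilinear form ω_a on H_ℂ by ω_a(x, y) := ⟨x, y·a⟩. Then W is totally isotropic for ω_a: ω_a(w, w') = 0 for all w, w' ∈ W. -/
import Mathlib


open scoped TensorProduct

noncomputable section

/-- Complex conjugation on `ℂ` as a `ℚ`-algebra homomorphism. -/
def conjQAlg : ℂ →ₐ[ℚ] ℂ := (Complex.conjAe.restrictScalars ℚ).toAlgHom

variable (H : Type) [Ring H] [Algebra ℚ H] [FiniteDimensional ℚ H]

/-- The conjugate-linear involution of `H_ℂ = ℂ ⊗[ℚ] H` fixing `H`. -/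
def sigmaC : ℂ ⊗[ℚ] H →ₗ[ℚ] ℂ ⊗[ℚ] H :=
  (Algebra.TensorProduct.map conjQAlg (AlgHom.id ℚ H)).toLinearMap

/-- The inclusion of `H` into `H_ℂ = ℂ ⊗[ℚ] H`. -/
def inclH : H →ₐ[ℚ] ℂ ⊗[ℚ] H := Algebra.TensorProduct.includeRight

/-- The data of a polarized weight 2 Hodge structure on a finite-dimensional `ℚ`-algebra `H`,
compatible with the ring structure:
(i) a Hodge decomposition `H_ℂ = H^{2,0} ⊕ H^{1,1} ⊕ H^{0,2}` with `σ(H^{2,0}) = H^{0,2}`,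
`σ(H^{1,1}) = H^{1,1}`;
(ii) a polarization: a symmetric `ℚ`-bilinear form `B` on `H` with `ℂ`-bilinear extension `BC`
to `H_ℂ`, whose associated Hermitian pairing `h(α,β) := BC α (σ β)` makes the Hodge pieces
pairwise orthogonal and is positive definite on `H^{2,0}`, `H^{0,2}` and negative definite on
`H^{1,1}`;
(iii) the product is a morphism of Hodge structures of bidegree `(-1,-1)`:
`H^{p,q}·H^{p',q'} ⊆ H^{p+p'-1,q+q'-1}`;
(iv) an adjunction `t`: a `ℚ`-linear involution with `t(ab) = t(b)t(a)`,
`⟨ab,c⟩ = ⟨b, t(a)c⟩` and `⟨ab,c⟩ = ⟨a, c·t(b)⟩`. -/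
structure HodgeAlgebraData where
  H20 : Submodule ℂ (ℂ ⊗[ℚ] H)
  H11 : Submodule ℂ (ℂ ⊗[ℚ] H)
  H02 : Submodule ℂ (ℂ ⊗[ℚ] H)
  sup_top : H20 ⊔ H11 ⊔ H02 = ⊤
  disj1 : H20 ⊓ (H11 ⊔ H02) = ⊥
  disj2 : H11 ⊓ H02 = ⊥
  sigma_20 : ∀ x ∈ H20, sigmaC H x ∈ H02
  sigma_02 : ∀ x ∈ H02, sigmaC H x ∈ H20
  sigma_11 : ∀ x ∈ H11, sigmaC H x ∈ H11
  B : H →ₗ[ℚ] H →ₗ[ℚ] ℚ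
  B_symm : ∀ a b : H, B a b = B b a
  BC : (ℂ ⊗[ℚ] H) →ₗ[ℂ] (ℂ ⊗[ℚ] H) →ₗ[ℂ] ℂ
  BC_extends : ∀ a b : H, BC (inclH H a) (inclH H b) = (B a b : ℂ)
  BC_symm : ∀ x y, BC x y = BC y x
  BC_conj : ∀ x y, BC (sigmaC H x) (sigmaC H y) = starRingEnd ℂ (BC x y)
  orth_20_11 : ∀ x ∈ H20, ∀ y ∈ H11, BC x (sigmaC H y) = 0
  orth_20_02 : ∀ x ∈ H20, ∀ y ∈ H02, BC x (sigmaC H y) = 0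
  orth_11_02 : ∀ x ∈ H11, ∀ y ∈ H02, BC x (sigmaC H y) = 0
  pos_20 : ∀ x ∈ H20, x ≠ 0 → 0 < (BC x (sigmaC H x)).re ∧ (BC x (sigmaC H x)).im = 0
  pos_02 : ∀ x ∈ H02, x ≠ 0 → 0 < (BC x (sigmaC H x)).re ∧ (BC x (sigmaC H x)).im = 0
  neg_11 : ∀ x ∈ H11, x ≠ 0 → (BC x (sigmaC H x)).re < 0 ∧ (BC x (sigmaC H x)).im = 0
  mul_20_20 : ∀ x ∈ H20, ∀ y ∈ H20, x * y = 0
  mul_20_11 : ∀ x ∈ H20, ∀ y ∈ H11, x * y ∈ H20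
  mul_11_20 : ∀ x ∈ H11, ∀ y ∈ H20, x * y ∈ H20
  mul_11_11 : ∀ x ∈ H11, ∀ y ∈ H11, x * y ∈ H11
  mul_20_02 : ∀ x ∈ H20, ∀ y ∈ H02, x * y ∈ H11
  mul_02_20 : ∀ x ∈ H02, ∀ y ∈ H20, x * y ∈ H11
  mul_02_02 : ∀ x ∈ H02, ∀ y ∈ H02, x * y = 0
  mul_11_02 : ∀ x ∈ H11, ∀ y ∈ H02, x * y ∈ H02
  mul_02_11 : ∀ x ∈ H02, ∀ y ∈ H11, x * y ∈ H02
  t : H →ₗ[ℚ] H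
  t_invol : ∀ a : H, t (t a) = a
  t_mul : ∀ a b : H, t (a * b) = t b * t a
  adj_left : ∀ a b c : H, B (a * b) c = B b (t a * c)
  adj_right : ∀ a b c : H, B (a * b) c = B a (c * t b)

variable {H}

/-- `W := H^{2,0}·H_ℂ`, the `ℂ`-linear span of all products `x·y` with `x ∈ H^{2,0}`,
`y ∈ H_ℂ`. -/
def HodgeAlgebraData.W (D : HodgeAlgebraData H) : Submodule ℂ (ℂ ⊗[ℚ] H) := D.H20 * ⊤

/-- `σ(W)`, the image of `W` under the conjugation `σ`, as a `ℚ`-subspace of `H_ℂ`. -/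
def HodgeAlgebraData.sigmaW (D : HodgeAlgebraData H) : Submodule ℚ (ℂ ⊗[ℚ] H) :=
  (D.W.restrictScalars ℚ).map (sigmaC H)

/-- The `ℂ`-linear extension of `t` to `H_ℂ`. -/
def HodgeAlgebraData.tC (D : HodgeAlgebraData H) : ℂ ⊗[ℚ] H →ₗ[ℂ] ℂ ⊗[ℚ] H :=
  LinearMap.baseChange ℂ D.t

/-! ### Auxiliary lemmas -/

lemma sigmaC_tmul (c : ℂ) (h : H) :
    sigmaC H (c ⊗ₜ[ℚ] h) = (starRingEnd ℂ c) ⊗ₜ[ℚ] h := by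
  simp [sigmaC, conjQAlg]

lemma sigmaC_sigmaC (x : ℂ ⊗[ℚ] H) : sigmaC H (sigmaC H x) = x := by
  induction x using TensorProduct.induction_on with
  | zero => simp
  | tmul c h => simp [sigmaC_tmul]
  | add u v hu hv => simp [map_add, hu, hv]

lemma sigmaC_one : sigmaC H (1 : ℂ ⊗[ℚ] H) = 1 :=
  map_one (Algebra.TensorProduct.map conjQAlg (AlgHom.id ℚ H))

lemma BC_tmul (D : HodgeAlgebraData H) (c d : ℂ) (a b : H) :
    D.BC (c ⊗ₜ[ℚ] a) (d ⊗ₜ[ℚ] b) = c * d * (D.B a b : ℂ) := by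
  have h1 : (c ⊗ₜ[ℚ] a : ℂ ⊗[ℚ] H) = c • inclH H a := by
    simp [inclH, TensorProduct.smul_tmul']
  have h2 : (d ⊗ₜ[ℚ] b : ℂ ⊗[ℚ] H) = d • inclH H b := by
    simp [inclH, TensorProduct.smul_tmul']
  rw [h1, h2, map_smul D.BC, LinearMap.smul_apply, map_smul, D.BC_extends,
    smul_eq_mul, smul_eq_mul]
  ring

lemma tC_tmul (D : HodgeAlgebraData H) (c : ℂ) (a : H) :
    D.tC (c ⊗ₜ[ℚ] a) = c ⊗ₜ[ℚ] (D.t a) := rfl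

/-- Complexified left adjunction. -/
lemma BC_adj_leftC (D : HodgeAlgebraData H) (x y z : ℂ ⊗[ℚ] H) :
    D.BC (x * y) z = D.BC y (D.tC x * z) := by
  induction x using TensorProduct.induction_on with
  | zero => simp
  | add u v hu hv => simp only [add_mul, map_add, LinearMap.add_apply, hu, hv]
  | tmul c a =>
    induction y using TensorProduct.induction_on with
    | zero => simp
    | add u v hu hv => simp only [mul_add, map_add, LinearMap.add_apply, hu, hv]
    | tmul d b =>
      induction z using TensorProduct.induction_on with
      | zero => simp
      | add u v hu hv => simp only [mul_add, map_add, hu, hv]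
      | tmul e k =>
        rw [tC_tmul, Algebra.TensorProduct.tmul_mul_tmul,
          Algebra.TensorProduct.tmul_mul_tmul, BC_tmul, BC_tmul, D.adj_left]
        ring

lemma decomp (D : HodgeAlgebraData H) (x : ℂ ⊗[ℚ] H) :
    ∃ x2 ∈ D.H20, ∃ x1 ∈ D.H11, ∃ x0 ∈ D.H02, x = x2 + x1 + x0 := by
  have hx : x ∈ D.H20 ⊔ D.H11 ⊔ D.H02 := by rw [D.sup_top]; trivial
  rcases Submodule.mem_sup.1 hx with ⟨y, hy, z, hz, rfl⟩
  rcases Submodule.mem_sup.1 hy with ⟨x2, h2, x1, h1, rfl⟩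
  exact ⟨x2, h2, x1, h1, z, hz, rfl⟩

lemma decomp_unique (D : HodgeAlgebraData H) {a2 a1 a0 : ℂ ⊗[ℚ] H}
    (h2 : a2 ∈ D.H20) (h1 : a1 ∈ D.H11) (h0 : a0 ∈ D.H02)
    (h : a2 + a1 + a0 = 0) : a2 = 0 ∧ a1 = 0 ∧ a0 = 0 := by
  have ha2 : a2 ∈ D.H20 ⊓ (D.H11 ⊔ D.H02) := by
    refine ⟨h2, ?_⟩
    have : a2 = -(a1 + a0) := by linear_combination (norm := abel) h
    rw [this]
    exact neg_mem (add_mem (Submodule.mem_sup_left h1) (Submodule.mem_sup_right h0))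
  rw [D.disj1, Submodule.mem_bot] at ha2
  have ha1 : a1 ∈ D.H11 ⊓ D.H02 := by
    refine ⟨h1, ?_⟩
    have : a1 = -a0 := by rw [ha2] at h; linear_combination (norm := abel) h
    rw [this]; exact neg_mem h0
  rw [D.disj2, Submodule.mem_bot] at ha1
  refine ⟨ha2, ha1, ?_⟩
  rw [ha2, ha1] at h; simpa using h

lemma one_mem_H11 (D : HodgeAlgebraData H) : (1 : ℂ ⊗[ℚ] H) ∈ D.H11 := by
  obtain ⟨e2, he2, e1, he1, e0, he0, h1eq⟩ := decomp D 1
  -- u * e2 = 0 for u ∈ H11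
  have k11 : ∀ u ∈ D.H11, u * e2 = 0 := by
    intro u hu
    have hsum : u * e2 + (u * e1 - u) + u * e0 = 0 := by
      have : u * (e2 + e1 + e0) = u := by rw [← h1eq, mul_one]
      rw [mul_add, mul_add] at this
      linear_combination (norm := abel) this
    exact (decomp_unique D (D.mul_11_20 u hu e2 he2)
      (sub_mem (D.mul_11_11 u hu e1 he1) hu) (D.mul_11_02 u hu e0 he0) hsum).1
  -- u * e2 = 0 for u ∈ H02
  have k02 : ∀ u ∈ D.H02, u * e2 = 0 := by
    intro u hu
    have hsum : (0 : ℂ ⊗[ℚ] H) + u * e2 + (u * e1 - u) = 0 := by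
      have : u * (e2 + e1 + e0) = u := by rw [← h1eq, mul_one]
      rw [mul_add, mul_add, D.mul_02_02 u hu e0 he0] at this
      linear_combination (norm := abel) this
    exact (decomp_unique D (zero_mem _) (D.mul_02_20 u hu e2 he2)
      (sub_mem (D.mul_02_11 u hu e1 he1) hu) hsum).2.1
  have he2z : e2 = 0 := by
    have : e2 * e2 + e1 * e2 + e0 * e2 = e2 := by
      rw [← add_mul, ← add_mul, ← h1eq, one_mul]
    rw [D.mul_20_20 e2 he2 e2 he2, k11 e1 he1, k02 e0 he0] at this
    simpa using this.symm
  -- 1 = e1 + e0 and σ(1) = 1 force e0 = 0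
  have h1eq' : (1 : ℂ ⊗[ℚ] H) = e1 + e0 := by rw [h1eq, he2z, zero_add]
  have hσ : (1 : ℂ ⊗[ℚ] H) = sigmaC H e1 + sigmaC H e0 := by
    conv_lhs => rw [← sigmaC_one (H := H), h1eq', map_add]
  have hsum : sigmaC H e0 + (sigmaC H e1 - e1) + (-e0) = 0 := by
    have := hσ.symm.trans h1eq'
    linear_combination (norm := abel) this
  have := (decomp_unique D (D.sigma_02 e0 he0)
    (sub_mem (D.sigma_11 e1 he1) he1) (neg_mem he0) hsum).2.2
  have he0z : e0 = 0 := by simpa [neg_eq_zero] using this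
  rw [h1eq', he0z, add_zero]
  exact he1

lemma BC_H20_H20 (D : HodgeAlgebraData H) {x y : ℂ ⊗[ℚ] H}
    (hx : x ∈ D.H20) (hy : y ∈ D.H20) : D.BC x y = 0 := by
  have := D.orth_20_02 x hx (sigmaC H y) (D.sigma_20 y hy)
  rwa [sigmaC_sigmaC] at this

lemma BC_H11_H20 (D : HodgeAlgebraData H) {x y : ℂ ⊗[ℚ] H}
    (hx : x ∈ D.H11) (hy : y ∈ D.H20) : D.BC x y = 0 := by
  have := D.orth_11_02 x hx (sigmaC H y) (D.sigma_20 y hy)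
  rwa [sigmaC_sigmaC] at this

/-- `t` preserves `H^{2,0}`. -/
lemma tC_mem_H20 (D : HodgeAlgebraData H) {x : ℂ ⊗[ℚ] H} (hx : x ∈ D.H20) :
    D.tC x ∈ D.H20 := by
  have key : ∀ u, D.BC (D.tC x) u = D.BC 1 (x * u) := by
    intro u
    rw [D.BC_symm 1 (x * u), BC_adj_leftC, mul_one, D.BC_symm]
  have k20 : ∀ u ∈ D.H20, D.BC (D.tC x) u = 0 := by
    intro u hu
    rw [key, D.mul_20_20 x hx u hu, map_zero]
  have k11 : ∀ u ∈ D.H11, D.BC (D.tC x) u = 0 := by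
    intro u hu
    rw [key]
    exact BC_H11_H20 D (one_mem_H11 D) (D.mul_20_11 x hx u hu)
  obtain ⟨z2, h2, z1, h1, z0, h0, hdec⟩ := decomp D (D.tC x)
  have hz0 : z0 = 0 := by
    by_contra hne
    have h5 : D.BC (D.tC x) (sigmaC H z0) = 0 := k20 _ (D.sigma_02 z0 h0)
    rw [hdec, map_add, map_add, LinearMap.add_apply, LinearMap.add_apply,
      D.orth_20_02 z2 h2 z0 h0, D.orth_11_02 z1 h1 z0 h0, zero_add, zero_add] at h5
    have := (D.pos_02 z0 h0 hne).1
    rw [h5] at this; simp at this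
  have hz1 : z1 = 0 := by
    by_contra hne
    have h5 : D.BC (D.tC x) (sigmaC H z1) = 0 := k11 _ (D.sigma_11 z1 h1)
    rw [hdec, hz0, add_zero, map_add, LinearMap.add_apply,
      D.orth_20_11 z2 h2 z1 h1, zero_add] at h5
    have := (D.neg_11 z1 h1 hne).1
    rw [h5] at this; simp at this
  rw [hdec, hz0, hz1, add_zero, add_zero]
  exact h2

lemma H20_mul_W (D : HodgeAlgebraData H) {z w : ℂ ⊗[ℚ] H}
    (hz : z ∈ D.H20) (hw : w ∈ D.W) : z * w = 0 := by
  refine Submodule.mul_induction_on hw (fun m hm n _ => ?_) (fun x y hx hy => ?_)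
  · rw [← mul_assoc, D.mul_20_20 z hz m hm, zero_mul]
  · rw [mul_add, hx, hy, add_zero]

/-- Let `a ∈ H` satisfy `t(a) = −a`, and define the bilinear form
`ω_a(x,y) := ⟨x, y·a⟩` on `H_ℂ`. Then `W` is totally isotropic for `ω_a`:
`ω_a(w, w') = 0` for all `w, w' ∈ W`. -/
theorem W_totally_isotropic (D : HodgeAlgebraData H) (a : H) (ha : D.t a = -a) :
    ∀ w ∈ D.W, ∀ w' ∈ D.W, D.BC w (w' * inclH H a) = 0 := by
  intro w hw w' hw'
  refine Submodule.mul_induction_on hw' (fun m hm n _ => ?_) (fun x y hx hy => ?_)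
  · rw [mul_assoc, D.BC_symm, BC_adj_leftC,
      H20_mul_W D (tC_mem_H20 D hm) hw, map_zero]
  · rw [add_mul, map_add, hx, hy, add_zero]
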